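/- Let R be a commutative noetherian ring with unity, let a be an ideal of R, and let f : M → N be an R-module homomorphism where both M and N are a-adically complete. Then im f is an a-adically complete R-module. -/

import Mathlib

/-! Completion is functorial, so `of I N ∘ f = map I f ∘ of I M`. An injective `f` into a
Hausdorff module therefore has Hausdorff source, and since completion preserves surjections,
a surjection out of a precomplete module has precomplete target. Apply this to
`range f ↪ N` and `M ↠ range f`. -/

open AdicCompletion

section

variable {R : Type*} [CommRing R] {I : Ideal R}
variable {M N : Type*} [AddCommGroup M] [Module R M] [AddCommGroup N] [Module R N]

theorem IsHausdorff.of_injective {f : M →ₗ[R] N} (hf : Function.Injective f)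
    (h : IsHausdorff I N) : IsHausdorff I M := by
  rw [← of_injective_iff] at h ⊢
  refine Function.Injective.of_comp (f := map I f) ?_
  simpa [Function.comp_def, map_of] using h.comp hf

theorem IsPrecomplete.of_surjective {f : M →ₗ[R] N} (hf : Function.Surjective f)
    (h : IsPrecomplete I M) : IsPrecomplete I N := by
  rw [← of_surjective_iff] at h ⊢
  refine Function.Surjective.of_comp (g := f) ?_
  simpa [Function.comp_def, map_of] using (map_surjective I hf).comp h

end

theorem image_adicComplete_of_complete_general
    {R : Type*} [CommRing R] (a : Ideal R)
    {M N : Type*} [AddCommGroup M] [Module R M] [AddCommGroup N] [Module R N]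
    (hM : Function.Bijective (AdicCompletion.of a M))
    (hN : Function.Bijective (AdicCompletion.of a N))
    (f : M →ₗ[R] N) :
    Function.Bijective (AdicCompletion.of a (LinearMap.range f)) :=
  ⟨of_injective_iff.mpr <|
      (of_injective_iff.mp hN.injective).of_injective (LinearMap.range f).injective_subtype,
    of_surjective_iff.mpr <|
      (of_surjective_iff.mp hM.surjective).of_surjective f.surjective_rangeRestrict⟩

/-- If `f : M → N` is a homomorphism of `a`-adically complete modules,
then `im f` is `a`-adically complete. -/
theorem image_adicComplete_of_complete
    {R : Type*} [CommRing R] [IsNoetherianRing R] (a : Ideal R)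
    {M N : Type*} [AddCommGroup M] [Module R M] [AddCommGroup N] [Module R N]
    (hM : Function.Bijective (AdicCompletion.of a M))
    (hN : Function.Bijective (AdicCompletion.of a N))
    (f : M →ₗ[R] N) :
    Function.Bijective (AdicCompletion.of a (LinearMap.range f)) :=
  image_adicComplete_of_complete_general a hM hN f
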